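/- arXiv:2108.13310 — 9 statements merged into one kernel-verified Lean document; each statement's English description precedes it below -/
import Mathlib

section
/- Let (X,κ) and (Y,λ) be digital images and let f : X → Y be a function. Then f is (κ,λ)-continuous if and only if the induced function f_* : 2^X → 2^Y defined by f_*(A) = f(A) is (κ',λ')-continuous, and this holds if and only if the induced function f_* : K(X,κ') → K(Y,λ') defined by f_*(A) = f(A) is (κ',λ')-continuous. -/
/-- `a` and `b` are adjacent or equal ("⟷≤") with respect to adjacency relation `α`. -/
def AdjEq {A : Type*} (α : A → A → Prop) (a b : A) : Prop := α a b ∨ a = b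

/-- `f : (X,κ) → (Y,lam)` is digitally continuous: adjacency is sent to
adjacency-or-equality. -/
def DigCont {X Y : Type*} (κ : X → X → Prop) (lam : Y → Y → Prop) (f : X → Y) : Prop :=
  ∀ x x', κ x x' → AdjEq lam (f x) (f x')

/-- Continuity of `f` relative to carrier sets: `f` maps `S` into `T` and sends
`α`-adjacent elements of `S` to `β`-adjacent-or-equal elements. -/
def ContOn {A B : Type*} (α : A → A → Prop) (β : B → B → Prop)
    (S : Set A) (T : Set B) (f : A → B) : Prop :=
  (∀ a ∈ S, f a ∈ T) ∧ ∀ a ∈ S, ∀ a' ∈ S, α a a' → AdjEq β (f a) (f a')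

/-- The hyperspace adjacency `κ'`: distinct `A, B` are adjacent iff every point of `A`
is adjacent-or-equal to some point of `B` and vice versa. -/
def HyperAdj {X : Type*} (κ : X → X → Prop) (A B : Finset X) : Prop :=
  A ≠ B ∧ (∀ a ∈ A, ∃ b ∈ B, AdjEq κ a b) ∧ ∀ b ∈ B, ∃ a ∈ A, AdjEq κ b a

/-- A subset `S` is connected w.r.t. adjacency `α`: any two of its points are joined by
a path (finite sequence of consecutively adjacent-or-equal points) lying in `S`. -/
def ConnIn {A : Type*} (α : A → A → Prop) (S : Set A) : Prop :=
  ∀ a ∈ S, ∀ b ∈ S, ∃ (n : ℕ) (p : ℕ → A), p 0 = a ∧ p n = b ∧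
    (∀ i ≤ n, p i ∈ S) ∧ ∀ i < n, AdjEq α (p i) (p (i + 1))

/-- `a` and `b` are joined by a path lying in `S` (i.e. they are in the same
connected component of the graph induced on `S`). -/
def Chain {A : Type*} (α : A → A → Prop) (S : Set A) (a b : A) : Prop :=
  ∃ (n : ℕ) (p : ℕ → A), p 0 = a ∧ p n = b ∧
    (∀ i ≤ n, p i ∈ S) ∧ ∀ i < n, AdjEq α (p i) (p (i + 1))

/-- The carrier of the hyperspace `2^X`: nonempty finite subsets of `X`. -/
def TwoX (X : Type*) : Set (Finset X) := {A | A.Nonempty}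

/-- The carrier of `K(X,κ')`: nonempty finite κ-connected subsets of `X`. -/
def KSet {X : Type*} (κ : X → X → Prop) : Set (Finset X) :=
  {A | A.Nonempty ∧ ConnIn κ (A : Set X)}

/-- A digital homotopy from `f` to `g`, relative to carriers `S`, `T`:
a function `F : S × [0,m] → T` with `F(·,0) = f`, `F(·,m) = g`, all tracks
`t ↦ F(a,t)` are paths, and all time slices `a ↦ F(a,t)` are continuous. -/
def HtpyOn {A B : Type*} (α : A → A → Prop) (β : B → B → Prop)
    (S : Set A) (T : Set B) (f g : A → B) : Prop :=
  ∃ (m : ℕ) (F : A → ℕ → B),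
    (∀ a ∈ S, ∀ t ≤ m, F a t ∈ T) ∧
    (∀ a ∈ S, F a 0 = f a) ∧ (∀ a ∈ S, F a m = g a) ∧
    (∀ a ∈ S, ∀ t < m, AdjEq β (F a t) (F a (t + 1))) ∧
    (∀ t ≤ m, ∀ a ∈ S, ∀ a' ∈ S, α a a' → AdjEq β (F a t) (F a' t))

/-- A digital homotopy from `f` to `g` in exactly `m` steps (on full types). -/
def HtpyN {X Y : Type*} (κ : X → X → Prop) (lam : Y → Y → Prop)
    (f g : X → Y) (m : ℕ) : Prop :=
  ∃ F : X → ℕ → Y,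
    (∀ x, F x 0 = f x) ∧ (∀ x, F x m = g x) ∧
    (∀ x, ∀ t < m, AdjEq lam (F x t) (F x (t + 1))) ∧
    (∀ t ≤ m, DigCont κ lam fun x => F x t)

/-- `f` and `g` are digitally homotopic. -/
def Htpy {X Y : Type*} (κ : X → X → Prop) (lam : Y → Y → Prop) (f g : X → Y) : Prop :=
  ∃ m, HtpyN κ lam f g m

/-- The graphs on carriers `S` and `T` have the same homotopy type. -/
def HtpyEquivOn {A B : Type*} (α : A → A → Prop) (β : B → B → Prop)
    (S : Set A) (T : Set B) : Prop :=
  ∃ (f : A → B) (g : B → A),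
    ContOn α β S T f ∧ ContOn β α T S g ∧
    HtpyOn α α S S (g ∘ f) id ∧ HtpyOn β β T T (f ∘ g) id

/-- The graph on carrier `S` is contractible: the identity is homotopic to a constant. -/
def ContractibleOn {A : Type*} (α : A → A → Prop) (S : Set A) : Prop :=
  ∃ c ∈ S, HtpyOn α α S S id fun _ => c

/-- `Φ`-adjacency of functions: `f ≠ g` and `f(x) ⟷≤ g(x)` for all `x`. -/
def PhiAdj {X Y : Type*} (lam : Y → Y → Prop) (f g : X → Y) : Prop :=
  f ≠ g ∧ ∀ x, AdjEq lam (f x) (g x)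

/-- `Ψ`-adjacency of functions: `f ≠ g` and `x₀ ⟷≤ x₁` implies `f(x₀) ⟷≤ g(x₁)`. -/
def PsiAdj {X Y : Type*} (κ : X → X → Prop) (lam : Y → Y → Prop) (f g : X → Y) : Prop :=
  f ≠ g ∧ ∀ x₀ x₁, AdjEq κ x₀ x₁ → AdjEq lam (f x₀) (g x₁)

/-- `C` is a connected component of the graph induced on the vertex set `V`:
a maximal connected subset of `V`. -/
def IsComponentIn {A : Type*} (α : A → A → Prop) (V C : Set A) : Prop :=
  C ⊆ V ∧ ConnIn α C ∧ ∀ C' : Set A, C' ⊆ V → ConnIn α C' → C ⊆ C' → C' = C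


/-! A continuous `f` maps paths to paths, so `f_*` preserves connectedness, and a point of `A`
matched to a `κ`-adjacent-or-equal point of `B` yields the same matching between `f(A)` and
`f(B)`, so `f_*` is continuous. Conversely, for a symmetric irreflexive `κ`, adjacent points
`x, x'` give adjacent singletons `{x}, {x'}`, which lie in `K(X,κ')`, and
`f_*{x} = {f x}` is `λ'`-adjacent or equal to `{f x'}` only if `f x ⟷≤ f x'`. -/

section

variable {X Y : Type*} {κ : X → X → Prop} {lam : Y → Y → Prop} {f : X → Y}

theorem DigCont.map_adjEq (hf : DigCont κ lam f) {a b : X} :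
    AdjEq κ a b → AdjEq lam (f a) (f b) := by
  rintro (h | rfl)
  · exact hf a b h
  · exact Or.inr rfl

theorem DigCont.adjEq_hyperAdj_image [DecidableEq Y] (hf : DigCont κ lam f) {A A' : Finset X}
    (h : HyperAdj κ A A') : AdjEq (HyperAdj lam) (A.image f) (A'.image f) := by
  obtain ⟨-, hAA', hA'A⟩ := h
  by_cases heq : A.image f = A'.image f
  · exact Or.inr heq
  refine Or.inl ⟨heq, ?_, ?_⟩
  · rw [Finset.forall_mem_image]
    intro a ha
    obtain ⟨b, hb, hab⟩ := hAA' a ha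
    exact ⟨f b, Finset.mem_image_of_mem f hb, hf.map_adjEq hab⟩
  · rw [Finset.forall_mem_image]
    intro b hb
    obtain ⟨a, ha, hba⟩ := hA'A b hb
    exact ⟨f a, Finset.mem_image_of_mem f ha, hf.map_adjEq hba⟩

theorem ConnIn.image (hf : DigCont κ lam f) {S : Set X} (hS : ConnIn κ S) :
    ConnIn lam (f '' S) := by
  rintro _ ⟨a, ha, rfl⟩ _ ⟨b, hb, rfl⟩
  obtain ⟨n, p, hp0, hpn, hpS, hpadj⟩ := hS a ha b hb
  exact ⟨n, f ∘ p, by simp [hp0], by simp [hpn], fun i hi => Set.mem_image_of_mem f (hpS i hi),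
    fun i hi => hf.map_adjEq (hpadj i hi)⟩

theorem connIn_singleton (α : X → X → Prop) (x : X) : ConnIn α {x} := by
  rintro a (rfl : a = x) b (rfl : b = a)
  exact ⟨0, fun _ => b, rfl, rfl, fun _ _ => rfl, fun i hi => absurd hi (Nat.not_lt_zero i)⟩

theorem hyperAdj_singleton (hsymm : ∀ x y, κ x y → κ y x) (hirr : ∀ x, ¬ κ x x) {x x' : X}
    (h : κ x x') : HyperAdj κ {x} {x'} := by
  refine ⟨?_, ?_, ?_⟩
  · rw [Ne, Finset.singleton_inj]
    rintro rfl
    exact hirr x h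
  · simp only [Finset.mem_singleton, forall_eq, exists_eq_left]
    exact Or.inl h
  · simp only [Finset.mem_singleton, forall_eq, exists_eq_left]
    exact Or.inl (hsymm x x' h)

theorem AdjEq.of_hyperAdj_singleton {y y' : Y} (h : AdjEq (HyperAdj lam) {y} {y'}) :
    AdjEq lam y y' := by
  rcases h with ⟨-, h, -⟩ | h
  · simpa using h
  · exact Or.inr (Finset.singleton_inj.mp h)

theorem digCont_iff_contOn_image [DecidableEq Y] (hsymm : ∀ x y, κ x y → κ y x)
    (hirr : ∀ x, ¬ κ x x) {S : Set (Finset X)} {T : Set (Finset Y)} (hS : ∀ x, {x} ∈ S)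
    (hST : DigCont κ lam f → ∀ A ∈ S, A.image f ∈ T) :
    DigCont κ lam f ↔ ContOn (HyperAdj κ) (HyperAdj lam) S T fun A => A.image f := by
  refine ⟨fun hf => ⟨hST hf, fun A _ A' _ h => hf.adjEq_hyperAdj_image h⟩, ?_⟩
  rintro ⟨-, hcont⟩ x x' h
  have := hcont {x} (hS x) {x'} (hS x') (hyperAdj_singleton hsymm hirr h)
  simp only [Finset.image_singleton] at this
  exact this.of_hyperAdj_singleton

end

theorem stmt0_general {X Y : Type*} [DecidableEq Y]
    (κ : X → X → Prop) (lam : Y → Y → Prop)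
    (hκsymm : ∀ x y, κ x y → κ y x) (hκirr : ∀ x, ¬ κ x x)
    (f : X → Y) :
    (DigCont κ lam f ↔
      ContOn (HyperAdj κ) (HyperAdj lam) (TwoX X) (TwoX Y) fun A => A.image f) ∧
    (DigCont κ lam f ↔
      ContOn (HyperAdj κ) (HyperAdj lam) (KSet κ) (KSet lam) fun A => A.image f) := by
  constructor
  · exact digCont_iff_contOn_image hκsymm hκirr Finset.singleton_nonempty
      fun _ A hA => hA.image f
  · refine digCont_iff_contOn_image hκsymm hκirr
      (fun x => ⟨Finset.singleton_nonempty x, by simpa using connIn_singleton κ x⟩) ?_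
    rintro hf A ⟨hA, hconn⟩
    exact ⟨hA.image f, by simpa only [Finset.coe_image] using hconn.image hf⟩

/-- `f` is `(κ,lam)`-continuous iff the induced map `A ↦ f(A)` is
`(κ',lam')`-continuous as a map `2^X → 2^Y`, iff it is `(κ',lam')`-continuous as a map
`K(X,κ') → K(Y,lam')`. -/
theorem stmt0 {X Y : Type*} [DecidableEq Y]
    (κ : X → X → Prop) (lam : Y → Y → Prop)
    (hκsymm : ∀ x y, κ x y → κ y x) (hκirr : ∀ x, ¬ κ x x)
    (hlsymm : ∀ x y, lam x y → lam y x) (hlirr : ∀ y, ¬ lam y y)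
    (f : X → Y) :
    (DigCont κ lam f ↔
      ContOn (HyperAdj κ) (HyperAdj lam) (TwoX X) (TwoX Y) fun A => A.image f) ∧
    (DigCont κ lam f ↔
      ContOn (HyperAdj κ) (HyperAdj lam) (KSet κ) (KSet lam) fun A => A.image f) :=
  stmt0_general κ lam hκsymm hκirr f
end

section
/- Let (X,κ) and (Y,λ) be digital images and let f,g ∈ Y^X be (κ,λ)-continuous functions. Then f and g are homotopic if and only if f and g belong to the same connected component of the graph (Y^X, Φ(κ,λ)). -/
theorem adjEq_phiAdj_iff {X Y : Type*} {lam : Y → Y → Prop} {f g : X → Y} :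
    AdjEq (PhiAdj lam) f g ↔ ∀ x, AdjEq lam (f x) (g x) := by
  constructor
  · rintro (⟨-, hfg⟩ | rfl)
    · exact hfg
    · exact fun _ => Or.inr rfl
  · intro hfg
    by_cases h : f = g
    · exact Or.inr h
    · exact Or.inl ⟨h, hfg⟩

/- A homotopy `F` and a Φ-path `p` of continuous maps are the same data, transposed:
`p t x = F x t`. -/
theorem HtpyN.chain {X Y : Type*} {κ : X → X → Prop} {lam : Y → Y → Prop} {f g : X → Y}
    {m : ℕ} (hF : HtpyN κ lam f g m) :
    Chain (PhiAdj lam) {h : X → Y | DigCont κ lam h} f g := by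
  obtain ⟨F, h0, hm, htrack, hslice⟩ := hF
  exact ⟨m, fun t x => F x t, funext h0, funext hm, hslice,
    fun t ht => adjEq_phiAdj_iff.mpr fun x => htrack x t ht⟩

theorem Chain.htpy {X Y : Type*} {κ : X → X → Prop} {lam : Y → Y → Prop} {f g : X → Y}
    (hc : Chain (PhiAdj lam) {h : X → Y | DigCont κ lam h} f g) : Htpy κ lam f g := by
  obtain ⟨n, p, h0, hn, hcont, hadj⟩ := hc
  exact ⟨n, fun x t => p t x, fun x => congrFun h0 x, fun x => congrFun hn x,
    fun x t ht => adjEq_phiAdj_iff.mp (hadj t ht) x, hcont⟩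

theorem stmt6_general {X Y : Type*}
    (κ : X → X → Prop) (lam : Y → Y → Prop)
    (f g : X → Y) :
    Htpy κ lam f g ↔ Chain (PhiAdj lam) {h : X → Y | DigCont κ lam h} f g :=
  ⟨fun ⟨_, hF⟩ => hF.chain, Chain.htpy⟩

/-- continuous `f, g : X → Y` are homotopic iff they belong to the same
connected component of the function graph `(Y^X, Φ(κ,lam))`. -/
theorem stmt6 {X Y : Type*}
    (κ : X → X → Prop) (lam : Y → Y → Prop)
    (hκsymm : ∀ x y, κ x y → κ y x) (hκirr : ∀ x, ¬ κ x x)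
    (hlsymm : ∀ x y, lam x y → lam y x) (hlirr : ∀ y, ¬ lam y y)
    (f g : X → Y) (hf : DigCont κ lam f) (hg : DigCont κ lam g) :
    Htpy κ lam f g ↔ Chain (PhiAdj lam) {h : X → Y | DigCont κ lam h} f g :=
  stmt6_general κ lam f g
end

section
/- Let (S_n,κ) be a cyclic graph with n > 4 points x_0,…,x_{n-1}, where x_i ⟷_κ x_j if and only if |i - j| ∈ {1, n-1}, and for 0 ≤ j < n let r_j : S_n → S_n be the rotation r_j(x_i) = x_{(i+j) mod n}. Then every two rotations r_j and r_k are κ-homotopic, but for j ≠ k the rotations r_j and r_k do not belong to the same connected component of (S_n^{S_n}, Ψ(κ,κ)). -/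
/-- The adjacency of the cyclic graph on `ZMod n` (`x_i ⟷ x_j` iff
`|i-j| ∈ {1, n-1}`, i.e. the indices differ by `±1` mod `n`). -/
def cycAdj (n : ℕ) : ZMod n → ZMod n → Prop := fun a b => b = a + 1 ∨ a = b + 1

lemma adjEq_cycAdj_iff {n : ℕ} {a b : ZMod n} :
    AdjEq (cycAdj n) a b ↔ b - a = 1 ∨ b - a = -1 ∨ b - a = 0 := by
  constructor
  · rintro ((rfl | rfl) | rfl) <;> simp
  · rintro (h | h | h)
    · exact Or.inl (Or.inl (by linear_combination h))
    · exact Or.inl (Or.inr (by linear_combination -h))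
    · exact Or.inr (by linear_combination -h)

lemma adjEq_cycAdj_add_one {n : ℕ} (a : ZMod n) : AdjEq (cycAdj n) a (a + 1) :=
  Or.inl (Or.inl rfl)

lemma digCont_cycAdj_add_right {n : ℕ} (c : ZMod n) :
    DigCont (cycAdj n) (cycAdj n) (· + c) := by
  rintro x x' (rfl | rfl)
  · exact Or.inl (Or.inl (add_right_comm x 1 c))
  · exact Or.inl (Or.inr (add_right_comm x' 1 c))

lemma natCast_ne_zero_of_lt {n m : ℕ} (hm : 0 < m) (hmn : m < n) : (m : ZMod n) ≠ 0 := by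
  rw [Ne, ZMod.natCast_eq_zero_iff]
  exact fun h => absurd (Nat.le_of_dvd hm h) (Nat.not_le.mpr hmn)

lemma eq_of_adjEq_cycAdj_sub_one_self_add_one {n : ℕ} (hn : 4 ≤ n) {a b : ZMod n}
    (hpred : AdjEq (cycAdj n) (a - 1) b) (hself : AdjEq (cycAdj n) a b)
    (hsucc : AdjEq (cycAdj n) (a + 1) b) : b = a := by
  have h1 : (1 : ZMod n) ≠ 0 := by exact_mod_cast natCast_ne_zero_of_lt (m := 1) one_pos (by omega)
  have h2 : (2 : ZMod n) ≠ 0 := by exact_mod_cast natCast_ne_zero_of_lt (m := 2) two_pos (by omega)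
  have h3 : (3 : ZMod n) ≠ 0 := by exact_mod_cast natCast_ne_zero_of_lt (m := 3) three_pos (by omega)
  rw [adjEq_cycAdj_iff] at hpred hself hsucc
  rcases hself with h | h | h
  · rcases hpred with h' | h' | h' <;> grind
  · rcases hsucc with h' | h' | h' <;> grind
  · exact sub_eq_zero.mp h

lemma not_psiAdj_add_right {n : ℕ} (hn : 4 ≤ n) (j : ZMod n) (g : ZMod n → ZMod n) :
    ¬ PsiAdj (cycAdj n) (cycAdj n) (· + j) g := by
  rintro ⟨hne, hg⟩
  refine hne (funext fun x => (eq_of_adjEq_cycAdj_sub_one_self_add_one hn ?_ ?_ ?_).symm)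
  · simpa only [sub_add_eq_add_sub] using hg (x - 1) x (Or.inl (Or.inl (sub_add_cancel x 1).symm))
  · exact hg x x (Or.inr rfl)
  · simpa only [add_right_comm x 1 j] using hg (x + 1) x (Or.inl (Or.inr rfl))

lemma Chain.eq_of_forall_not_adj {A : Type*} {α : A → A → Prop} {S : Set A} {a b : A}
    (ha : ∀ c, ¬ α a c) (h : Chain α S a b) : a = b := by
  obtain ⟨m, p, hp0, hpm, -, hp⟩ := h
  have hconst : ∀ i ≤ m, p i = a := by
    intro i hi
    induction i with
    | zero => exact hp0
    | succ i ih =>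
      have hpi := ih (by omega)
      exact ((hp i (by omega)).resolve_left (hpi ▸ ha _)).symm.trans hpi
  exact (hconst m le_rfl).symm.trans hpm

lemma htpy_cycAdj_add_right {n : ℕ} [NeZero n] (j k : ZMod n) :
    Htpy (cycAdj n) (cycAdj n) (· + j) (· + k) := by
  refine ⟨(k - j).val, fun x (t : ℕ) => x + (j + t), fun x => by simp, fun x => ?_,
    fun x t _ => ?_, fun t _ => digCont_cycAdj_add_right (j + (t : ZMod n))⟩
  · simp only [ZMod.natCast_val, ZMod.cast_id', id, add_sub_cancel]
  · simpa only [Nat.cast_succ, add_assoc] using adjEq_cycAdj_add_one (x + (j + (t : ZMod n)))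

/-- in the cyclic graph `S_n` (`n > 4`) all rotations
`r_j(x_i) = x_{i+j}` are homotopic to each other, but distinct rotations never lie in
the same connected component of `(S_n^{S_n}, Ψ)`. -/
theorem stmt7 (n : ℕ) (hn : 4 < n) :
    (∀ j k : ZMod n,
      Htpy (cycAdj n) (cycAdj n) (fun i => i + j) (fun i => i + k)) ∧
    (∀ j k : ZMod n, j ≠ k →
      ¬ Chain (PsiAdj (cycAdj n) (cycAdj n))
          {f : ZMod n → ZMod n | DigCont (cycAdj n) (cycAdj n) f}
          (fun i => i + j) (fun i => i + k)) := by
  have : NeZero n := ⟨by omega⟩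
  refine ⟨htpy_cycAdj_add_right, fun j k hjk hchain => hjk ?_⟩
  have hrot := hchain.eq_of_forall_not_adj (not_psiAdj_add_right hn.le j)
  simpa using congrFun hrot 0
end

section
/- Let (X,κ) and (Y,λ) be digital images and let W ⊂ Y be a λ-retract of Y. Then (W^X, Φ(κ,λ)) is a retract of (Y^X, Φ(κ,λ)); that is, there is a Φ(κ,λ)-continuous map ρ : Y^X → W^X with ρ(f) = f for every f ∈ Y^X whose image lies in W. -/
theorem AdjEq.map {A B : Type*} {α : A → A → Prop} {β : B → B → Prop} {g : A → B}
    (hg : DigCont α β g) {a b : A} (h : AdjEq α a b) : AdjEq β (g a) (g b) :=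
  h.elim (hg a b) fun hab => Or.inr (congrArg g hab)

theorem DigCont.comp {X Y Z : Type*} {κ : X → X → Prop} {lam : Y → Y → Prop}
    {mu : Z → Z → Prop} {g : Y → Z} {f : X → Y} (hg : DigCont lam mu g)
    (hf : DigCont κ lam f) : DigCont κ mu (g ∘ f) :=
  fun x x' hxx' => (hf x x' hxx').map hg

theorem PhiAdj.comp_left {X Y Z : Type*} {lam : Y → Y → Prop} {mu : Z → Z → Prop}
    {g : Y → Z} (hg : DigCont lam mu g) {f f' : X → Y} (h : PhiAdj lam f f') :
    AdjEq (PhiAdj mu) (g ∘ f) (g ∘ f') := by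
  by_cases heq : g ∘ f = g ∘ f'
  · exact Or.inr heq
  · exact Or.inl ⟨heq, fun x => (h.2 x).map hg⟩

theorem contOn_phiAdj_comp_left {X Y Z : Type*} {κ : X → X → Prop} {lam : Y → Y → Prop}
    {mu : Z → Z → Prop} {g : Y → Z} (hg : DigCont lam mu g) {W : Set Z} (hgW : ∀ y, g y ∈ W) :
    ContOn (PhiAdj lam) (PhiAdj mu) {f : X → Y | DigCont κ lam f}
      {f : X → Z | DigCont κ mu f ∧ ∀ x, f x ∈ W} (g ∘ ·) :=
  ⟨fun _ hf => ⟨hg.comp hf, fun _ => hgW _⟩, fun _ _ _ _ h => h.comp_left hg⟩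

theorem stmt8_general {X Y : Type*}
    (κ : X → X → Prop) (lam : Y → Y → Prop)
    (W : Set Y)
    (hW : ∃ r : Y → Y, DigCont lam lam r ∧ (∀ y, r y ∈ W) ∧ ∀ w ∈ W, r w = w) :
    ∃ ρ : (X → Y) → (X → Y),
      ContOn (PhiAdj lam) (PhiAdj lam)
        {f : X → Y | DigCont κ lam f}
        {f : X → Y | DigCont κ lam f ∧ ∀ x, f x ∈ W} ρ ∧
      ∀ f : X → Y, DigCont κ lam f → (∀ x, f x ∈ W) → ρ f = f := by
  obtain ⟨r, hr, hrW, hr_fix⟩ := hW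
  exact ⟨(r ∘ ·), contOn_phiAdj_comp_left hr hrW,
    fun f _ hfW => funext fun x => hr_fix _ (hfW x)⟩

/-- if `W ⊆ Y` is a `lam`-retract of `Y`, then the function graph
`(W^X, Φ(κ,lam))` is a retract of `(Y^X, Φ(κ,lam))`. -/
theorem stmt8 {X Y : Type*}
    (κ : X → X → Prop) (lam : Y → Y → Prop)
    (hκsymm : ∀ x y, κ x y → κ y x) (hκirr : ∀ x, ¬ κ x x)
    (hlsymm : ∀ x y, lam x y → lam y x) (hlirr : ∀ y, ¬ lam y y)
    (W : Set Y)
    (hW : ∃ r : Y → Y, DigCont lam lam r ∧ (∀ y, r y ∈ W) ∧ ∀ w ∈ W, r w = w) :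
    ∃ ρ : (X → Y) → (X → Y),
      ContOn (PhiAdj lam) (PhiAdj lam)
        {f : X → Y | DigCont κ lam f}
        {f : X → Y | DigCont κ lam f ∧ ∀ x, f x ∈ W} ρ ∧
      ∀ f : X → Y, DigCont κ lam f → (∀ x, f x ∈ W) → ρ f = f :=
  stmt8_general κ lam W hW
end

section
/- Let (W,κ), (X,λ), and (Y,μ) be digital images and let f,g : X → Y be (λ,μ)-continuous maps that are (λ,μ)-homotopic. Then the induced maps f_*, g_* : (X^W, Φ(κ,λ)) → (Y^W, Φ(κ,μ)), defined by f_*(F) = f∘F and g_*(F) = g∘F, are (Φ(κ,λ), Φ(κ,μ))-continuous and are homotopic. -/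
/-! Post-composition with a continuous map preserves Φ-adjacency pointwise, so `f_*` and `g_*`
are continuous; a homotopy `H` from `f` to `g` induces the homotopy `(F, t) ↦ H(·, t) ∘ F`
from `f_*` to `g_*`, whose time slices are again post-compositions with continuous maps. -/

section PostComposition

variable {W X Y : Type*} {κ : W → W → Prop} {lam : X → X → Prop} {mu : Y → Y → Prop}

lemma adjEq_phiAdj_iff_s10 {a b : W → Y} :
    AdjEq (PhiAdj mu) a b ↔ ∀ w, AdjEq mu (a w) (b w) := by
  constructor
  · rintro (⟨-, h⟩ | rfl)
    · exact h
    · exact fun _ => Or.inr rfl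
  · intro h
    by_cases hab : a = b
    · exact Or.inr hab
    · exact Or.inl ⟨hab, h⟩

lemma DigCont.adjEq {h : X → Y} (hh : DigCont lam mu h) {x x' : X} (hx : AdjEq lam x x') :
    AdjEq mu (h x) (h x') := by
  rcases hx with hx | rfl
  · exact hh x x' hx
  · exact Or.inr rfl

lemma DigCont.comp_s10 {h : X → Y} {F : W → X} (hh : DigCont lam mu h) (hF : DigCont κ lam F) :
    DigCont κ mu (h ∘ F) :=
  fun _ _ hw => hh.adjEq (hF _ _ hw)

lemma DigCont.postcomp (W : Type*) {h : X → Y} (hh : DigCont lam mu h) :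
    DigCont (PhiAdj lam) (PhiAdj mu) fun F : W → X => h ∘ F :=
  fun _ _ hF => adjEq_phiAdj_iff_s10.2 fun w => hh.adjEq (adjEq_phiAdj_iff_s10.1 (Or.inl hF) w)

lemma DigCont.contOn_postcomp (κ : W → W → Prop) {h : X → Y} (hh : DigCont lam mu h) :
    ContOn (PhiAdj lam) (PhiAdj mu)
      {F : W → X | DigCont κ lam F} {G : W → Y | DigCont κ mu G} (fun F => h ∘ F) :=
  ⟨fun _ hF => hh.comp_s10 hF, fun F _ F' _ hFF' => hh.postcomp W F F' hFF'⟩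

lemma HtpyN.htpyOn_postcomp (κ : W → W → Prop) {f g : X → Y} {m : ℕ}
    (hH : HtpyN lam mu f g m) :
    HtpyOn (PhiAdj lam) (PhiAdj mu)
      {F : W → X | DigCont κ lam F} {G : W → Y | DigCont κ mu G}
      (fun F => f ∘ F) (fun F => g ∘ F) := by
  obtain ⟨H, H_zero, H_last, H_track, H_slice⟩ := hH
  refine ⟨m, fun F t w => H (F w) t, ?_, ?_, ?_, ?_, ?_⟩
  · intro F hF t ht
    exact (H_slice t ht).comp_s10 hF
  · intro F _
    funext w
    exact H_zero (F w)
  · intro F _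
    funext w
    exact H_last (F w)
  · intro F _ t ht
    exact adjEq_phiAdj_iff_s10.2 fun w => H_track (F w) t ht
  · intro t ht F _ F' _ hFF'
    exact (H_slice t ht).postcomp W F F' hFF'

end PostComposition

theorem stmt10_general {W X Y : Type*}
    (κ : W → W → Prop) (lam : X → X → Prop) (mu : Y → Y → Prop)
    (f g : X → Y) (hf : DigCont lam mu f) (hg : DigCont lam mu g)
    (h : Htpy lam mu f g) :
    ContOn (PhiAdj lam) (PhiAdj mu)
      {F : W → X | DigCont κ lam F} {G : W → Y | DigCont κ mu G}
      (fun F => f ∘ F) ∧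
    ContOn (PhiAdj lam) (PhiAdj mu)
      {F : W → X | DigCont κ lam F} {G : W → Y | DigCont κ mu G}
      (fun F => g ∘ F) ∧
    HtpyOn (PhiAdj lam) (PhiAdj mu)
      {F : W → X | DigCont κ lam F} {G : W → Y | DigCont κ mu G}
      (fun F => f ∘ F) (fun F => g ∘ F) := by
  obtain ⟨m, hH⟩ := h
  exact ⟨hf.contOn_postcomp κ, hg.contOn_postcomp κ, hH.htpyOn_postcomp κ⟩

/-- if `f, g : X → Y` are `(lam,mu)`-homotopic continuous maps, then the
induced maps `F ↦ f∘F`, `F ↦ g∘F` from `(X^W, Φ(κ,lam))` to `(Y^W, Φ(κ,mu))` are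
continuous and homotopic. -/
theorem stmt10 {W X Y : Type*}
    (κ : W → W → Prop) (lam : X → X → Prop) (mu : Y → Y → Prop)
    (hκsymm : ∀ x y, κ x y → κ y x) (hκirr : ∀ x, ¬ κ x x)
    (hlsymm : ∀ x y, lam x y → lam y x) (hlirr : ∀ x, ¬ lam x x)
    (hmsymm : ∀ x y, mu x y → mu y x) (hmirr : ∀ y, ¬ mu y y)
    (f g : X → Y) (hf : DigCont lam mu f) (hg : DigCont lam mu g)
    (h : Htpy lam mu f g) :
    ContOn (PhiAdj lam) (PhiAdj mu)
      {F : W → X | DigCont κ lam F} {G : W → Y | DigCont κ mu G}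
      (fun F => f ∘ F) ∧
    ContOn (PhiAdj lam) (PhiAdj mu)
      {F : W → X | DigCont κ lam F} {G : W → Y | DigCont κ mu G}
      (fun F => g ∘ F) ∧
    HtpyOn (PhiAdj lam) (PhiAdj mu)
      {F : W → X | DigCont κ lam F} {G : W → Y | DigCont κ mu G}
      (fun F => f ∘ F) (fun F => g ∘ F) :=
  stmt10_general κ lam mu f g hf hg h
end

section
/- Let (X,κ) be a digital image and let W be a nonempty κ'-connected subset of K(X,κ'). Then W' = ⋃_{Y ∈ W} Y is a κ-connected subset of X. -/
/-!
A `κ`-path inside a member of `W` stays inside the union. To join `a ∈ A` to `b ∈ B`, follow a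
`κ'`-path `A = C₀, …, Cₙ = B` in `W` backwards: every point of `Cᵢ` is `κ`-adjacent or equal to
a point of `Cᵢ₊₁`, which by induction is joined to `b`; the last leg runs inside `B`, which is
`κ`-connected.
-/

open Relation

section Chain

variable {A : Type*} {α : A → A → Prop} {S T : Set A} {a b : A}

def StepIn (α : A → A → Prop) (S : Set A) (x y : A) : Prop :=
  x ∈ S ∧ y ∈ S ∧ AdjEq α x y

theorem StepIn.mono (hST : S ⊆ T) {x y : A} (h : StepIn α S x y) : StepIn α T x y :=
  ⟨hST h.1, hST h.2.1, h.2.2⟩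

theorem chain_iff_reflTransGen (ha : a ∈ S) :
    Chain α S a b ↔ ReflTransGen (StepIn α S) a b := by
  constructor
  · rintro ⟨n, p, rfl, rfl, hpS, hpadj⟩
    suffices ∀ k ≤ n, ReflTransGen (StepIn α S) (p 0) (p k) from this n le_rfl
    intro k hk
    induction k with
    | zero => exact ReflTransGen.refl
    | succ k ih =>
      exact (ih (by omega)).tail ⟨hpS k (by omega), hpS (k + 1) hk, hpadj k hk⟩
  · intro h
    induction h with
    | refl => exact ⟨0, fun _ => a, rfl, rfl, fun _ _ => ha, fun _ h => (Nat.not_lt_zero _ h).elim⟩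
    | @tail c d _ hcd ih =>
      obtain ⟨n, p, hp0, hpn, hpS, hpadj⟩ := ih
      refine ⟨n + 1, fun i => if i ≤ n then p i else d, by simpa using hp0, by simp, ?_, ?_⟩
      · intro i hi
        dsimp only
        split_ifs with h
        exacts [hpS i h, hcd.2.1]
      · intro i hi
        rcases Nat.lt_succ_iff_lt_or_eq.1 hi with hi | rfl
        · simpa [hi.le, Nat.succ_le_of_lt hi] using hpadj i hi
        · simpa [hpn] using hcd.2.2

theorem connIn_iff_reflTransGen :
    ConnIn α S ↔ ∀ a ∈ S, ∀ b ∈ S, ReflTransGen (StepIn α S) a b :=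
  forall₂_congr fun _ ha => forall₂_congr fun _ _ => chain_iff_reflTransGen ha

end Chain

section Hyperspace

variable {X : Type*} {κ : X → X → Prop}

theorem exists_adjEq_of_adjEq_hyperAdj {C D : Finset X} (hCD : AdjEq (HyperAdj κ) C D)
    {x : X} (hx : x ∈ C) : ∃ y ∈ D, AdjEq κ x y := by
  rcases hCD with ⟨-, hCD, -⟩ | rfl
  exacts [hCD x hx, ⟨x, hx, Or.inr rfl⟩]

theorem connIn_biUnion_of_connIn_hyperAdj {W : Set (Finset X)}
    (hW : ∀ C ∈ W, ConnIn κ (C : Set X)) (hWconn : ConnIn (HyperAdj κ) W) :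
    ConnIn κ (⋃ C ∈ W, (C : Set X)) := by
  set U := ⋃ C ∈ W, (C : Set X)
  have hsub : ∀ C ∈ W, (C : Set X) ⊆ U := fun C hC => Set.subset_biUnion_of_mem hC
  rw [connIn_iff_reflTransGen]
  intro a ha b hb
  obtain ⟨A, hA, haA⟩ := Set.mem_iUnion₂.1 ha
  obtain ⟨B, hB, hbB⟩ := Set.mem_iUnion₂.1 hb
  suffices ∀ C, ReflTransGen (StepIn (HyperAdj κ) W) C B →
      ∀ x ∈ C, ReflTransGen (StepIn κ U) x b from
    this A (connIn_iff_reflTransGen.1 hWconn A hA B hB) a haA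
  intro C hCB
  induction hCB using ReflTransGen.head_induction_on with
  | refl =>
    intro x hx
    exact ReflTransGen.mono (fun _ _ => StepIn.mono (hsub B hB)) _ _
      (connIn_iff_reflTransGen.1 (hW B hB) x hx b hbB)
  | @head C D hCD _ ih =>
    intro x hx
    obtain ⟨y, hy, hxy⟩ := exists_adjEq_of_adjEq_hyperAdj hCD.2.2 hx
    exact ReflTransGen.head ⟨hsub C hCD.1 hx, hsub D hCD.2.1 hy, hxy⟩ (ih y hy)

end Hyperspace

theorem stmt12_general {X : Type*}
    (κ : X → X → Prop)
    (W : Set (Finset X)) (hWK : W ⊆ KSet κ)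
    (hWconn : ConnIn (HyperAdj κ) W) :
    ConnIn κ (⋃ A ∈ W, (A : Set X)) :=
  connIn_biUnion_of_connIn_hyperAdj (fun _ hC => (hWK hC).2) hWconn

/-- if `W` is a nonempty `κ'`-connected subset of `K(X,κ')`, then the
union `W' = ⋃_{Y ∈ W} Y` is a `κ`-connected subset of `X`. -/
theorem stmt12 {X : Type*}
    (κ : X → X → Prop)
    (hκsymm : ∀ x y, κ x y → κ y x) (hκirr : ∀ x, ¬ κ x x)
    (W : Set (Finset X)) (hWK : W ⊆ KSet κ) (hWne : W.Nonempty)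
    (hWconn : ConnIn (HyperAdj κ) W) :
    ConnIn κ (⋃ A ∈ W, (A : Set X)) :=
  stmt12_general κ W hWK hWconn
end

section
/- Let C₀ and C₁ be distinct connected components of a digital image (X,κ), and let A_i ∈ K(C_i,κ') for i ∈ {0,1} (i.e., A_i is a nonempty finite κ-connected subset of C_i). Then A₀ and A₁ lie in distinct connected components of the graph K(X,κ'). -/
/-! Along a `κ'`-path of finite sets `A₀ = P₀, …, Pₙ = A₁`, a point of `A₀` can walk, one
`κ`-adjacency at a time, to a point of every `Pᵢ`, in particular of `A₁`. Hence `C₀` and `C₁`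
share a point, and two components sharing a point coincide. -/

section Chain

variable {A : Type*} {α : A → A → Prop} {S T : Set A} {a b c : A}

theorem Chain.refl (ha : a ∈ S) : Chain α S a a :=
  ⟨0, fun _ => a, rfl, rfl, fun _ _ => ha, fun _ h => absurd h (Nat.not_lt_zero _)⟩

theorem Chain.single (ha : a ∈ S) (hb : b ∈ S) (h : AdjEq α a b) : Chain α S a b := by
  refine ⟨1, fun i => if i = 0 then a else b, rfl, rfl, fun i _ => ?_, fun i hi => ?_⟩
  · dsimp only; split <;> assumption
  · obtain rfl : i = 0 := by omega
    simpa using h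

theorem Chain.mem_right (h : Chain α S a b) : b ∈ S := by
  obtain ⟨n, p, -, rfl, hpS, -⟩ := h
  exact hpS n le_rfl

theorem Chain.mono (hST : S ⊆ T) (h : Chain α S a b) : Chain α T a b := by
  obtain ⟨n, p, hp0, hpn, hpS, hp⟩ := h
  exact ⟨n, p, hp0, hpn, fun i hi => hST (hpS i hi), hp⟩

theorem Chain.trans (h₁ : Chain α S a b) (h₂ : Chain α S b c) : Chain α S a c := by
  obtain ⟨n, p, rfl, rfl, hpS, hp⟩ := h₁
  obtain ⟨m, q, hq0, rfl, hqS, hq⟩ := h₂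
  refine ⟨n + m, fun i => if i ≤ n then p i else q (i - n), by simp, ?_,
    fun i hi => ?_, fun i hi => ?_⟩
  · rcases Nat.eq_zero_or_pos m with rfl | hm
    · simp [hq0]
    · simp [show ¬ n + m ≤ n by omega]
  · dsimp only
    split_ifs with hin
    · exact hpS i hin
    · exact hqS (i - n) (by omega)
  · dsimp only
    rcases lt_trichotomy i n with hin | rfl | hin
    · simpa [hin.le, Nat.succ_le_of_lt hin] using hp i hin
    · simpa [hq0] using hq 0 (by omega)
    · simpa [show ¬ i ≤ n by omega, show ¬ i + 1 ≤ n by omega,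
        show i + 1 - n = i - n + 1 by omega] using hq (i - n) (by omega)

theorem Chain.symm (hα : ∀ x y, α x y → α y x) (h : Chain α S a b) : Chain α S b a := by
  obtain ⟨n, p, rfl, rfl, hpS, hp⟩ := h
  refine ⟨n, fun i => p (n - i), by simp, by simp, fun i _ => hpS _ (Nat.sub_le n i),
    fun i hi => ?_⟩
  have e : n - i = n - (i + 1) + 1 := by omega
  dsimp only
  rw [e]
  rcases hp (n - (i + 1)) (by omega) with h | h
  · exact Or.inl (hα _ _ h)
  · exact Or.inr h.symm

theorem ConnIn.chain (h : ConnIn α S) (ha : a ∈ S) (hb : b ∈ S) : Chain α S a b :=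
  h a ha b hb

/-- Each prefix of a chain is again a chain. -/
theorem Chain.to_reachable (h : Chain α S a b) : Chain α {x | Chain α S a x} a b := by
  obtain ⟨n, p, hp0, hpn, hpS, hp⟩ := h
  exact ⟨n, p, hp0, hpn,
    fun i hi => ⟨i, p, hp0, rfl, fun j hj => hpS j (by omega), fun j hj => hp j (by omega)⟩, hp⟩

end Chain

section Component

variable {A : Type*} {α : A → A → Prop} {V C C' : Set A} {a b : A}

/-- The set reachable from a point of `C` is connected and contains `C`, so by maximality it
is `C`. -/
theorem IsComponentIn.mem_of_chain (hα : ∀ x y, α x y → α y x) (hC : IsComponentIn α V C)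
    (ha : a ∈ C) (hab : Chain α V a b) : b ∈ C := by
  set R := {x | Chain α V a x}
  have hRV : R ⊆ V := fun x hx => Chain.mem_right hx
  have hR : ConnIn α R := fun x hx y hy =>
    (Chain.to_reachable hx).symm hα |>.trans (Chain.to_reachable hy)
  have hCR : C ⊆ R := fun x hx => (hC.2.1.chain ha hx).mono hC.1
  exact hC.2.2 R hRV hR hCR ▸ hab

theorem IsComponentIn.eq_of_mem (hα : ∀ x y, α x y → α y x) (hC : IsComponentIn α V C)
    (hC' : IsComponentIn α V C') (haC : a ∈ C) (haC' : a ∈ C') : C = C' := by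
  have hC'C : C' ⊆ C := fun x hx => hC.mem_of_chain hα haC ((hC'.2.1.chain haC' hx).mono hC'.1)
  exact hC'.2.2 C hC.1 hC.2.1 hC'C

end Component

section Hyperspace

variable {X : Type*} {κ : X → X → Prop} {T : Set (Finset X)} {A B : Finset X} {a : X}

theorem exists_adjEq_of_adjEq_hyperAdj_s13 (hAB : AdjEq (HyperAdj κ) A B) (ha : a ∈ A) :
    ∃ b ∈ B, AdjEq κ a b := by
  rcases hAB with hAB | rfl
  · exact hAB.2.1 a ha
  · exact ⟨a, ha, Or.inr rfl⟩

theorem Chain.exists_chain_of_hyperAdj (h : Chain (HyperAdj κ) T A B) (ha : a ∈ A) :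
    ∃ b ∈ B, Chain κ Set.univ a b := by
  obtain ⟨n, P, rfl, rfl, -, hP⟩ := h
  suffices ∀ i ≤ n, ∃ x ∈ P i, Chain κ Set.univ a x from this n le_rfl
  intro i hi
  induction i with
  | zero => exact ⟨a, ha, Chain.refl (Set.mem_univ a)⟩
  | succ i ih =>
    obtain ⟨x, hx, hax⟩ := ih (by omega)
    obtain ⟨y, hy, hxy⟩ := exists_adjEq_of_adjEq_hyperAdj_s13 (hP i (by omega)) hx
    exact ⟨y, hy, hax.trans (Chain.single (Set.mem_univ x) (Set.mem_univ y) hxy)⟩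

end Hyperspace

theorem stmt13_general {X : Type*}
    (κ : X → X → Prop)
    (hκsymm : ∀ x y, κ x y → κ y x)
    (C₀ C₁ : Set X)
    (hC₀ : IsComponentIn κ Set.univ C₀) (hC₁ : IsComponentIn κ Set.univ C₁)
    (hCne : C₀ ≠ C₁)
    (A₀ A₁ : Finset X)
    (hA₀C : (A₀ : Set X) ⊆ C₀)
    (hA₁C : (A₁ : Set X) ⊆ C₁) :
    ∀ D₀ D₁ : Set (Finset X),
      IsComponentIn (HyperAdj κ) (KSet κ) D₀ →
      IsComponentIn (HyperAdj κ) (KSet κ) D₁ →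
      A₀ ∈ D₀ → A₁ ∈ D₁ → D₀ ≠ D₁ := by
  rintro D₀ D₁ hD₀ - hA₀D hA₁D rfl
  obtain ⟨a₀, ha₀⟩ := (hD₀.1 hA₀D).1
  obtain ⟨a₁, ha₁, h₀₁⟩ := (hD₀.2.1.chain hA₀D hA₁D).exists_chain_of_hyperAdj ha₀
  exact hCne <| hC₀.eq_of_mem hκsymm hC₁ (hC₀.mem_of_chain hκsymm (hA₀C ha₀) h₀₁) (hA₁C ha₁)

/-- if `C₀, C₁` are distinct connected components of `(X,κ)` and
`A_i ∈ K(C_i, κ')`, then `A₀` and `A₁` lie in distinct connected components of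
`K(X,κ')`. -/
theorem stmt13 {X : Type*}
    (κ : X → X → Prop)
    (hκsymm : ∀ x y, κ x y → κ y x) (hκirr : ∀ x, ¬ κ x x)
    (C₀ C₁ : Set X)
    (hC₀ : IsComponentIn κ Set.univ C₀) (hC₁ : IsComponentIn κ Set.univ C₁)
    (hCne : C₀ ≠ C₁)
    (A₀ A₁ : Finset X)
    (hA₀K : A₀ ∈ KSet κ) (hA₀C : (A₀ : Set X) ⊆ C₀)
    (hA₁K : A₁ ∈ KSet κ) (hA₁C : (A₁ : Set X) ⊆ C₁) :
    ∀ D₀ D₁ : Set (Finset X),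
      IsComponentIn (HyperAdj κ) (KSet κ) D₀ →
      IsComponentIn (HyperAdj κ) (KSet κ) D₁ →
      A₀ ∈ D₀ → A₁ ∈ D₁ → D₀ ≠ D₁ :=
  stmt13_general κ hκsymm C₀ C₁ hC₀ hC₁ hCne A₀ A₁ hA₀C hA₁C
end

section
/- Let F : (X,κ) ⊸ (Y,λ) be a multivalued function between digital images (assigning to each x ∈ X a nonempty finite subset F(x) ⊂ Y) that has strong continuity. Then the function F_* : (2^X,κ') → (2^Y,λ') defined by F_*(A) = ⋃_{x∈A} F(x) is (κ',λ')-continuous. -/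
section HyperAdj

variable {X Y : Type*} {κ : X → X → Prop}

theorem adjEq_hyperAdj_of_forall_exists_adjEq {A B : Finset X}
    (hAB : ∀ a ∈ A, ∃ b ∈ B, AdjEq κ a b) (hBA : ∀ b ∈ B, ∃ a ∈ A, AdjEq κ b a) :
    AdjEq (HyperAdj κ) A B := by
  by_cases h : A = B
  · exact Or.inr h
  · exact Or.inl ⟨h, hAB, hBA⟩

theorem forall_exists_adjEq_biUnion [DecidableEq Y] {lam : Y → Y → Prop} {F : X → Finset Y}
    (hF : ∀ x y, κ x y → ∀ p ∈ F x, ∃ q ∈ F y, AdjEq lam p q) {A B : Finset X}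
    (hAB : ∀ a ∈ A, ∃ b ∈ B, AdjEq κ a b) :
    ∀ p ∈ A.biUnion F, ∃ q ∈ B.biUnion F, AdjEq lam p q := by
  intro p hp
  obtain ⟨a, ha, hpa⟩ := Finset.mem_biUnion.1 hp
  obtain ⟨b, hb, hadj | rfl⟩ := hAB a ha
  · obtain ⟨q, hqb, hpq⟩ := hF a b hadj p hpa
    exact ⟨q, Finset.mem_biUnion.2 ⟨b, hb, hqb⟩, hpq⟩
  · exact ⟨p, Finset.mem_biUnion.2 ⟨a, hb, hpa⟩, Or.inr rfl⟩

end HyperAdj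

theorem stmt17_general {X Y : Type*} [DecidableEq Y]
    (κ : X → X → Prop) (lam : Y → Y → Prop)
    (F : X → Finset Y) (hFne : ∀ x, (F x).Nonempty)
    (hstrong : ∀ x y, κ x y →
      (∀ p ∈ F x, ∃ q ∈ F y, AdjEq lam p q) ∧ (∀ q ∈ F y, ∃ p ∈ F x, AdjEq lam q p)) :
    ContOn (HyperAdj κ) (HyperAdj lam) (TwoX X) (TwoX Y)
      (fun A => A.biUnion F) := by
  have hF : ∀ x y, κ x y → ∀ p ∈ F x, ∃ q ∈ F y, AdjEq lam p q :=
    fun x y hxy => (hstrong x y hxy).1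
  refine ⟨fun A hA => Finset.Nonempty.biUnion hA fun x _ => hFne x, ?_⟩
  rintro A - B - ⟨-, hAB, hBA⟩
  exact adjEq_hyperAdj_of_forall_exists_adjEq
    (forall_exists_adjEq_biUnion hF hAB) (forall_exists_adjEq_biUnion hF hBA)

/-- if the multivalued function `F : (X,κ) ⊸ (Y,lam)` (with each `F x`
a nonempty finite subset of `Y`) has strong continuity, then
`F_* : (2^X,κ') → (2^Y,lam')`, `F_*(A) = ⋃_{x ∈ A} F(x)`, is `(κ',lam')`-continuous. -/
theorem stmt17 {X Y : Type*} [DecidableEq Y]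
    (κ : X → X → Prop) (lam : Y → Y → Prop)
    (hκsymm : ∀ x y, κ x y → κ y x) (hκirr : ∀ x, ¬ κ x x)
    (hlsymm : ∀ x y, lam x y → lam y x) (hlirr : ∀ y, ¬ lam y y)
    (F : X → Finset Y) (hFne : ∀ x, (F x).Nonempty)
    (hstrong : ∀ x y, κ x y →
      (∀ p ∈ F x, ∃ q ∈ F y, AdjEq lam p q) ∧ (∀ q ∈ F y, ∃ p ∈ F x, AdjEq lam q p)) :
    ContOn (HyperAdj κ) (HyperAdj lam) (TwoX X) (TwoX Y)
      (fun A => A.biUnion F) :=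
  stmt17_general κ lam F hFne hstrong
end

section
/- Let (X,κ) be a digital image. Then K(X,κ') contains a 3-cycle (three pairwise distinct, pairwise κ'-adjacent members) if and only if (X,κ) has a non-isolated point (a point x with x ⟷_κ y for some y ∈ X). -/
/-! If no two points are adjacent, `⟷≤` is equality and the hyperspace adjacency can only relate
a set to itself, so `2^X` has no edges at all. Conversely an edge `x ⟷ y` yields the triangle
`{x}`, `{y}`, `{x, y}` of connected sets. -/

section

variable {X : Type*} {κ : X → X → Prop}

theorem connIn_of_forall_adjEq {S : Set X} (h : ∀ a ∈ S, ∀ b ∈ S, AdjEq κ a b) :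
    ConnIn κ S := by
  intro a ha b hb
  refine ⟨1, fun i => if i = 0 then a else b, rfl, rfl, fun i _ => ?_, fun i hi => ?_⟩
  · dsimp only
    split_ifs <;> assumption
  · obtain rfl : i = 0 := by omega
    simpa using h a ha b hb

theorem singleton_mem_kSet (x : X) : ({x} : Finset X) ∈ KSet κ :=
  ⟨Finset.singleton_nonempty x, connIn_of_forall_adjEq fun a ha b hb => by
    simp only [Finset.coe_singleton, Set.mem_singleton_iff] at ha hb
    exact Or.inr (ha.trans hb.symm)⟩

theorem pair_mem_kSet [DecidableEq X] {x y : X} (hxy : κ x y) (hyx : κ y x) :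
    ({x, y} : Finset X) ∈ KSet κ :=
  ⟨Finset.insert_nonempty x {y}, connIn_of_forall_adjEq fun a ha b hb => by
    simp only [Finset.coe_insert, Finset.coe_singleton, Set.mem_insert_iff,
      Set.mem_singleton_iff] at ha hb
    rcases ha with rfl | rfl <;> rcases hb with rfl | rfl
    exacts [Or.inr rfl, Or.inl hxy, Or.inl hyx, Or.inr rfl]⟩

theorem HyperAdj.exists_adj {A B : Finset X} (h : HyperAdj κ A B) : ∃ x y, κ x y := by
  obtain ⟨hne, hAB, hBA⟩ := h
  by_contra! hno
  have subset_of_cover {S T : Finset X} (hST : ∀ a ∈ S, ∃ b ∈ T, AdjEq κ a b) : S ⊆ T :=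
    fun a ha => by
      obtain ⟨b, hb, hab | rfl⟩ := hST a ha
      exacts [(hno a b hab).elim, hb]
  exact hne (subset_of_cover hAB |>.antisymm (subset_of_cover hBA))

theorem hyperAdj_singleton_singleton {x y : X} (hne : x ≠ y) (hxy : κ x y) (hyx : κ y x) :
    HyperAdj κ {x} {y} :=
  ⟨by simpa using hne,
    fun a ha => ⟨y, Finset.mem_singleton_self y, Or.inl (Finset.mem_singleton.1 ha ▸ hxy)⟩,
    fun b hb => ⟨x, Finset.mem_singleton_self x, Or.inl (Finset.mem_singleton.1 hb ▸ hyx)⟩⟩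

theorem hyperAdj_singleton_pair [DecidableEq X] {x y : X} (hne : x ≠ y) (hyx : κ y x) :
    HyperAdj κ {x} {x, y} := by
  refine ⟨fun h => hne ?_, by simp [AdjEq], by simp [AdjEq, hyx]⟩
  exact (Finset.mem_singleton.1 (h ▸ Finset.mem_insert_of_mem (Finset.mem_singleton_self y))).symm

end

/-- `K(X,κ')` contains a 3-cycle (three pairwise distinct, pairwise
`κ'`-adjacent members) iff `(X,κ)` has a non-isolated point. -/
theorem stmt18 {X : Type*}
    (κ : X → X → Prop)
    (hκsymm : ∀ x y, κ x y → κ y x) (hκirr : ∀ x, ¬ κ x x) :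
    (∃ A B C : Finset X, A ∈ KSet κ ∧ B ∈ KSet κ ∧ C ∈ KSet κ ∧
      A ≠ B ∧ B ≠ C ∧ A ≠ C ∧
      HyperAdj κ A B ∧ HyperAdj κ B C ∧ HyperAdj κ A C) ↔
    ∃ x y : X, κ x y := by
  classical
  constructor
  · rintro ⟨A, B, -, -, -, -, -, -, -, hAB, -, -⟩
    exact hAB.exists_adj
  · rintro ⟨x, y, hxy⟩
    have hne : x ≠ y := fun h => hκirr x (h ▸ hxy)
    have hyx := hκsymm x y hxy
    have hAB : HyperAdj κ {x} {y} := hyperAdj_singleton_singleton hne hxy hyx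
    have hBC : HyperAdj κ {y} {x, y} :=
      Finset.pair_comm y x ▸ hyperAdj_singleton_pair hne.symm hxy
    have hAC : HyperAdj κ {x} {x, y} := hyperAdj_singleton_pair hne hyx
    exact ⟨{x}, {y}, {x, y}, singleton_mem_kSet x, singleton_mem_kSet y, pair_mem_kSet hxy hyx,
      hAB.1, hBC.1, hAC.1, hAB, hBC, hAC⟩
end
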